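/- arXiv:2412.11725 — 2 statements merged into one kernel-verified Lean document; each statement's English description precedes it below -/
import Mathlib

section
/- Every measurable subset of the plane with infinite Lebesgue measure contains the three vertices of a (non-degenerate) triangle of area exactly 1. -/
/-!
Some vertical slice `{y | (x₀, y) ∈ S}` has positive measure, so by Steinhaus' theorem its
difference set contains an interval `(-ε, ε)`. A set of infinite measure is unbounded, say in the
first coordinate (otherwise swap the axes), so it contains a point `z` with `|z.1 - x₀| > 2 / ε`.
Then `S` contains `(x₀, a)` and `(x₀, b)` with `b - a = 2 / (z.1 - x₀)`, and together with `z`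
these span a triangle of base `|b - a|` and height `|z.1 - x₀|`, i.e. of area `1`.
-/

open MeasureTheory

/-- Twice the signed area determinant helper: area of triangle `A B C`. -/
noncomputable def triangleArea (A B C : ℝ × ℝ) : ℝ :=
  |(B.1 - A.1) * (C.2 - A.2) - (C.1 - A.1) * (B.2 - A.2)| / 2

open Set Pointwise

def areaForm (A B C : ℝ × ℝ) : ℝ :=
  (B.1 - A.1) * (C.2 - A.2) - (C.1 - A.1) * (B.2 - A.2)

theorem triangleArea_eq_abs_areaForm (A B C : ℝ × ℝ) :
    triangleArea A B C = |areaForm A B C| / 2 :=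
  rfl

theorem areaForm_swap (A B C : ℝ × ℝ) :
    areaForm A.swap B.swap C.swap = -areaForm A B C := by
  simp only [areaForm, Prod.fst_swap, Prod.snd_swap]
  ring

theorem not_collinear_of_areaForm_ne_zero {A B C : ℝ × ℝ} (h : areaForm A B C ≠ 0) :
    ¬ Collinear ℝ ({A, B, C} : Set (ℝ × ℝ)) := by
  rw [collinear_iff_of_mem (mem_insert A _)]
  rintro ⟨v, hv⟩
  obtain ⟨t, rfl⟩ := hv B (by simp)
  obtain ⟨s, rfl⟩ := hv C (by simp)
  apply h
  simp only [areaForm, vadd_eq_add, Prod.fst_add, Prod.snd_add, Prod.smul_fst, Prod.smul_snd,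
    smul_eq_mul]
  ring

theorem exists_measure_slice_ne_zero {α β : Type*} [MeasurableSpace α] [MeasurableSpace β]
    {μ : Measure α} {ν : Measure β} [SFinite ν] {s : Set (α × β)} (hs : MeasurableSet s)
    (h : μ.prod ν s ≠ 0) : ∃ x, ν (Prod.mk x ⁻¹' s) ≠ 0 := by
  by_contra! hzero
  exact h ((Measure.measure_prod_null hs).2 (Filter.Eventually.of_forall hzero))

theorem exists_areaForm_eq_of_not_isBounded_fst {S : Set (ℝ × ℝ)} (hS : MeasurableSet S)
    (hpos : volume S ≠ 0) (hunb : ¬ Bornology.IsBounded (Prod.fst '' S)) (c : ℝ) :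
    ∃ A ∈ S, ∃ B ∈ S, ∃ C ∈ S, areaForm A B C = c := by
  rw [Measure.volume_eq_prod] at hpos
  obtain ⟨x₀, hx₀⟩ := exists_measure_slice_ne_zero hS hpos
  have hsteinhaus : Prod.mk x₀ ⁻¹' S - Prod.mk x₀ ⁻¹' S ∈ nhds (0 : ℝ) :=
    Measure.sub_mem_nhds_zero_of_addHaar_pos volume _ (hS.preimage measurable_prodMk_left)
      (pos_iff_ne_zero.2 hx₀)
  obtain ⟨ε, hε, hball⟩ := Metric.mem_nhds_iff.1 hsteinhaus
  rw [isBounded_iff_forall_norm_le] at hunb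
  push Not at hunb
  obtain ⟨_, ⟨z, hz, rfl⟩, hzfar⟩ := hunb (|x₀| + |c| / ε)
  have hfar : |c| / ε < |z.1 - x₀| := by
    have := abs_sub_abs_le_abs_sub z.1 x₀
    rw [Real.norm_eq_abs] at hzfar
    linarith
  have hd : 0 < |z.1 - x₀| := (div_nonneg (abs_nonneg c) hε.le).trans_lt hfar
  have hgap : c / (z.1 - x₀) ∈ Metric.ball (0 : ℝ) ε := by
    rw [mem_ball_zero_iff, Real.norm_eq_abs, abs_div, div_lt_iff₀ hd]
    rwa [div_lt_iff₀ hε, mul_comm] at hfar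
  obtain ⟨b, hb, a, ha, hba⟩ := mem_sub.1 (hball hgap)
  refine ⟨(x₀, a), ha, z, hz, (x₀, b), hb, ?_⟩
  simp only [areaForm, sub_self, zero_mul, sub_zero, hba]
  field_simp [abs_pos.1 hd]

theorem exists_areaForm_eq_of_not_isBounded_snd {S : Set (ℝ × ℝ)} (hS : MeasurableSet S)
    (hpos : volume S ≠ 0) (hunb : ¬ Bornology.IsBounded (Prod.snd '' S)) (c : ℝ) :
    ∃ A ∈ S, ∃ B ∈ S, ∃ C ∈ S, areaForm A B C = c := by
  have hswap : MeasurePreserving (Prod.swap : ℝ × ℝ → ℝ × ℝ) volume volume := by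
    rw [Measure.volume_eq_prod]
    exact Measure.measurePreserving_swap
  have hpos' : volume (Prod.swap ⁻¹' S) ≠ 0 := by
    rwa [hswap.measure_preimage hS.nullMeasurableSet]
  have hunb' : ¬ Bornology.IsBounded (Prod.fst '' (Prod.swap ⁻¹' S)) := by
    rwa [← image_swap_eq_preimage_swap, image_image]
  obtain ⟨A, hA, B, hB, C, hC, h⟩ :=
    exists_areaForm_eq_of_not_isBounded_fst (hS.preimage measurable_swap) hpos' hunb' (-c)
  exact ⟨A.swap, hA, B.swap, hB, C.swap, hC, by rw [areaForm_swap, h, neg_neg]⟩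

theorem not_isBounded_fst_or_snd_of_measure_eq_top {α β : Type*} [PseudoMetricSpace α]
    [PseudoMetricSpace β] [ProperSpace α] [ProperSpace β] [MeasurableSpace (α × β)]
    {μ : Measure (α × β)} [IsFiniteMeasureOnCompacts μ] {S : Set (α × β)} (hμ : μ S = ⊤) :
    ¬ Bornology.IsBounded (Prod.fst '' S) ∨ ¬ Bornology.IsBounded (Prod.snd '' S) := by
  by_contra! h
  exact (h.1.prod h.2 |>.subset subset_prod |>.measure_lt_top).ne hμ

/-- Every measurable subset of the plane with infinite Lebesgue measure contains the three
vertices of a non-degenerate triangle of area exactly 1. -/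
theorem infinite_measure_set_contains_unit_area_triangle
    (S : Set (ℝ × ℝ)) (hS : MeasurableSet S) (hvol : volume S = ⊤) :
    ∃ A ∈ S, ∃ B ∈ S, ∃ C ∈ S,
      ¬ Collinear ℝ ({A, B, C} : Set (ℝ × ℝ)) ∧ triangleArea A B C = 1 := by
  have hpos : volume S ≠ 0 := by simp [hvol]
  obtain ⟨A, hA, B, hB, C, hC, h⟩ : ∃ A ∈ S, ∃ B ∈ S, ∃ C ∈ S, areaForm A B C = 2 := by
    rcases not_isBounded_fst_or_snd_of_measure_eq_top hvol with hunb | hunb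
    · exact exists_areaForm_eq_of_not_isBounded_fst hS hpos hunb 2
    · exact exists_areaForm_eq_of_not_isBounded_snd hS hpos hunb 2
  refine ⟨A, hA, B, hB, C, hC, not_collinear_of_areaForm_ne_zero (by norm_num [h]), ?_⟩
  rw [triangleArea_eq_abs_areaForm, h]
  norm_num
end

section
/- Let triangle ABC have angles α at A, β at B, γ at C, with 30° < α, β < 150°. Then the 2×2 matrix M = [[1, (cos 2α · sin β − cos α · sin γ) sin γ / sin³ α], [0, sin² β / sin² α]] satisfies det M ≥ 1/4 and the Frobenius norm of M is less than 20; in particular the operator norm of M is less than 20. -/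
/-!
Only crude bounds are needed. For `π/6 < x < 5π/6` we have `1/2 < sin x ≤ 1`, so the diagonal
entry `sin² β / sin² α` lies in `(1/4, 4)`, while the numerator of the off-diagonal entry has
absolute value at most `2` and its denominator exceeds `1/8`. Hence the squared Frobenius norm is
below `1 + 16² + 4² < 20²`, and the Frobenius norm dominates the operator norm by Cauchy–Schwarz,
i.e. by submultiplicativity of the Frobenius norm applied to `A` times a column vector.
-/

open Real

namespace Matrix

section Frobenius

attribute [local instance] frobeniusNormedAddCommGroup

variable {n : Type*} [Fintype n] [DecidableEq n]

theorem norm_toEuclideanCLM_le_frobenius_norm {𝕜 : Type*} [RCLike 𝕜] (A : Matrix n n 𝕜) :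
    ‖toEuclideanCLM (n := n) (𝕜 := 𝕜) A‖ ≤ ‖A‖ := by
  refine ContinuousLinearMap.opNorm_le_bound _ (norm_nonneg _) fun x => ?_
  calc ‖toEuclideanCLM (n := n) (𝕜 := 𝕜) A x‖
      = ‖A * replicateCol Unit (WithLp.ofLp x)‖ := by
        rw [← replicateCol_mulVec, frobenius_norm_replicateCol]; rfl
    _ ≤ ‖A‖ * ‖x‖ := by
        simpa using frobenius_norm_mul A (replicateCol Unit (WithLp.ofLp x))

theorem norm_toEuclideanCLM_le_sqrt_sum_sq (A : Matrix n n ℝ) :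
    ‖toEuclideanCLM (n := n) (𝕜 := ℝ) A‖ ≤ √(∑ i, ∑ j, A i j ^ 2) := by
  simpa [frobenius_norm_def, Real.sqrt_eq_rpow, Real.rpow_two] using
    norm_toEuclideanCLM_le_frobenius_norm A

end Frobenius

theorem sum_sum_sq_fin_two_of {R : Type*} [Semiring R] (a b c d : R) :
    ∑ i : Fin 2, ∑ j : Fin 2, (!![a, b; c, d] : Matrix (Fin 2) (Fin 2) R) i j ^ 2 =
      a ^ 2 + b ^ 2 + c ^ 2 + d ^ 2 := by
  simp [Fin.sum_univ_two, add_assoc]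

end Matrix

theorem one_half_lt_sin_of_mem_Ioo {x : ℝ} (h₁ : π / 6 < x) (h₂ : x < 5 * π / 6) :
    1 / 2 < sin x := by
  have key : ∀ y, π / 6 < y → y ≤ π / 2 → 1 / 2 < sin y := fun y hy₁ hy₂ => by
    simpa only [sin_pi_div_six] using
      strictMonoOn_sin ⟨by linarith [pi_pos], by linarith⟩ ⟨by linarith [pi_pos], hy₂⟩ hy₁
  rcases le_or_gt x (π / 2) with hx | hx
  · exact key x h₁ hx
  · rw [← sin_pi_sub]
    exact key (π - x) (by linarith) (by linarith)

theorem abs_cos_mul_sin_sub_cos_mul_sin_mul_sin_le_two (x y z w : ℝ) :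
    |(cos x * sin y - cos z * sin w) * sin w| ≤ 2 := by
  have h₁ : |cos x * sin y| ≤ 1 := by
    rw [abs_mul]; exact mul_le_one₀ (abs_cos_le_one x) (abs_nonneg _) (abs_sin_le_one y)
  have h₂ : |cos z * sin w| ≤ 1 := by
    rw [abs_mul]; exact mul_le_one₀ (abs_cos_le_one z) (abs_nonneg _) (abs_sin_le_one w)
  calc |(cos x * sin y - cos z * sin w) * sin w|
      = |cos x * sin y - cos z * sin w| * |sin w| := abs_mul _ _
    _ ≤ 2 * 1 := by
        gcongr
        · linarith [abs_sub (cos x * sin y) (cos z * sin w)]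
        · exact abs_sin_le_one w
    _ = 2 := mul_one 2

theorem abs_div_pow_lt {N s b c : ℝ} {n : ℕ} (hN : |N| ≤ c) (hc : 0 < c) (hb : 0 < b)
    (hs : b < s) (hn : n ≠ 0) : |N / s ^ n| < c / b ^ n := by
  have hsn : 0 < s ^ n := pow_pos (hb.trans hs) n
  rw [abs_div, abs_of_pos hsn]
  calc |N| / s ^ n ≤ c / s ^ n := by gcongr
    _ < c / b ^ n := div_lt_div_of_pos_left hc (pow_pos hb n) (pow_lt_pow_left₀ hs hb.le hn)

theorem derivative_matrix_bounds_general (α β γ : ℝ)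
    (hα : π / 6 < α ∧ α < 5 * π / 6) (hβ : π / 6 < β ∧ β < 5 * π / 6) :
    (1 / 4 : ℝ) ≤
        (!![1, (cos (2 * α) * sin β - cos α * sin γ) * sin γ / sin α ^ 3;
            0, sin β ^ 2 / sin α ^ 2] : Matrix (Fin 2) (Fin 2) ℝ).det ∧
    Real.sqrt (∑ i : Fin 2, ∑ j : Fin 2,
        (!![1, (cos (2 * α) * sin β - cos α * sin γ) * sin γ / sin α ^ 3;
            0, sin β ^ 2 / sin α ^ 2] : Matrix (Fin 2) (Fin 2) ℝ) i j ^ 2) < 20 ∧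
    ‖Matrix.toEuclideanCLM (𝕜 := ℝ)
        (!![1, (cos (2 * α) * sin β - cos α * sin γ) * sin γ / sin α ^ 3;
            0, sin β ^ 2 / sin α ^ 2] : Matrix (Fin 2) (Fin 2) ℝ)‖ < 20 := by
  have hsα := one_half_lt_sin_of_mem_Ioo hα.1 hα.2
  have hsβ := one_half_lt_sin_of_mem_Ioo hβ.1 hβ.2
  have hsα₁ := sin_le_one α
  have hsβ₁ := sin_le_one β
  set a := (cos (2 * α) * sin β - cos α * sin γ) * sin γ / sin α ^ 3
  set d := sin β ^ 2 / sin α ^ 2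
  have ha : |a| < 16 := by
    refine (abs_div_pow_lt (abs_cos_mul_sin_sub_cos_mul_sin_mul_sin_le_two (2 * α) β α γ)
      two_pos one_half_pos hsα three_ne_zero).trans_eq ?_
    norm_num
  have hd_lower : 1 / 4 ≤ d := by
    rw [le_div_iff₀ (by positivity)]; nlinarith
  have hd_upper : d ≤ 4 := by
    rw [div_le_iff₀ (by positivity)]; nlinarith
  have hfrob : √(∑ i : Fin 2, ∑ j : Fin 2, (!![1, a; 0, d] : Matrix (Fin 2) (Fin 2) ℝ) i j ^ 2)
      < 20 := by
    rw [Matrix.sum_sum_sq_fin_two_of, sqrt_lt' (by norm_num)]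
    nlinarith [sq_abs a, abs_nonneg a]
  refine ⟨by simpa [Matrix.det_fin_two_of] using hd_lower, hfrob, ?_⟩
  exact (Matrix.norm_toEuclideanCLM_le_sqrt_sum_sq _).trans_lt hfrob

/-- For a triangle with angles `α, β, γ` (positive, summing to `π`) with
`30° < α, β < 150°`, the matrix
`M = [[1, (cos 2α sin β − cos α sin γ) sin γ / sin³ α], [0, sin² β / sin² α]]`
has determinant at least `1/4`, Frobenius norm less than `20`, and operator norm (as a map
on the Euclidean plane) less than `20`. -/
theorem derivative_matrix_bounds (α β γ : ℝ) (hα0 : 0 < α) (hβ0 : 0 < β) (hγ0 : 0 < γ)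
    (hsum : α + β + γ = π)
    (hα : π / 6 < α ∧ α < 5 * π / 6) (hβ : π / 6 < β ∧ β < 5 * π / 6) :
    (1 / 4 : ℝ) ≤
        (!![1, (cos (2 * α) * sin β - cos α * sin γ) * sin γ / sin α ^ 3;
            0, sin β ^ 2 / sin α ^ 2] : Matrix (Fin 2) (Fin 2) ℝ).det ∧
    Real.sqrt (∑ i : Fin 2, ∑ j : Fin 2,
        (!![1, (cos (2 * α) * sin β - cos α * sin γ) * sin γ / sin α ^ 3;
            0, sin β ^ 2 / sin α ^ 2] : Matrix (Fin 2) (Fin 2) ℝ) i j ^ 2) < 20 ∧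
    ‖Matrix.toEuclideanCLM (𝕜 := ℝ)
        (!![1, (cos (2 * α) * sin β - cos α * sin γ) * sin γ / sin α ^ 3;
            0, sin β ^ 2 / sin α ^ 2] : Matrix (Fin 2) (Fin 2) ℝ)‖ < 20 :=
  derivative_matrix_bounds_general α β γ hα hβ
end
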